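/- Let K be an algebraically closed field and n ≥ 1. Let A = Kⁿ as an additive group, let T = Kˣ act on A by the automorphisms d_t(a₁, …, aₙ) = (t·a₁, t²·a₂, …, tⁿ·aₙ), and let G = A ⋊ T be the corresponding semidirect product. Let B be a linear hyperplane of Kⁿ with B ∩ K·eᵢ = {0} for every standard basis vector eᵢ, regarded as a subgroup of G via the inclusions B ≤ A ≤ G. Then the normal core of B in G (the largest normal subgroup of G contained in B, equivalently ⋂_{g ∈ G} g B g⁻¹) is trivial; equivalently, the action of G by left multiplication on the coset space G/B is faithful. -/

import Mathlib

/-- The multiplicative group structure that older Mathlib put on `AddAut A`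
(multiplication is composition), restored here. -/
instance addAutGroupOld {A : Type*} [Add A] : Group (AddAut A) where
  mul g h := AddEquiv.trans h g
  one := AddEquiv.refl _
  inv := AddEquiv.symm
  mul_assoc _ _ _ := rfl
  one_mul _ := rfl
  mul_one _ := rfl
  inv_mul_cancel := AddEquiv.self_trans_symm

/-- The canonical group homomorphism from additive automorphisms of an additive
group `A` to multiplicative automorphisms of `Multiplicative A`. -/
def addAutToMulAut {A : Type*} [AddGroup A] : AddAut A →* MulAut (Multiplicative A) where
  toFun f := AddEquiv.toMultiplicative f
  map_one' := rfl
  map_mul' _ _ := rfl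

/-!
An element `b` of the normal core is an element of `B` all of whose conjugates
`d_t b = (t^{i+1} b_i)_i` by `T` stay in `B`. Writing `B = ker f` for a linear form `f`,
`t ↦ f (d_t b) = ∑ f(eᵢ) bᵢ t^{i+1}` is a polynomial vanishing on the infinite set `Kˣ`,
so every `f(eᵢ) bᵢ` vanishes; since `eᵢ ∉ B` means `f(eᵢ) ≠ 0`, we get `b = 0`.
-/

theorem Submodule.exists_ker_eq_of_finrank_quotient_eq_one {K V : Type*} [Field K]
    [AddCommGroup V] [Module K V] [FiniteDimensional K V] {B : Submodule K V}
    (hB : Module.finrank K (V ⧸ B) = 1) : ∃ f : V →ₗ[K] K, LinearMap.ker f = B := by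
  let e := LinearEquiv.ofFinrankEq (R := K) (V ⧸ B) K (by rw [hB, Module.finrank_self])
  exact ⟨e.toLinearMap ∘ₗ B.mkQ, by rw [LinearEquiv.ker_comp, Submodule.ker_mkQ]⟩

section

variable {K : Type*} [Field K] [Infinite K] {n : ℕ}

open Polynomial in
theorem eq_zero_of_forall_sum_mul_pow_succ_eq_zero
    (c : Fin n → K) (h : ∀ t : K, t ≠ 0 → ∑ i, c i * t ^ (i.val + 1) = 0) : c = 0 := by
  set p : K[X] := ∑ i : Fin n, C (c i) * X ^ (i.val + 1)
  have hroots : {0}ᶜ ⊆ {t | p.IsRoot t} := fun t ht => by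
    simpa [p, eval_finsetSum] using h t ht
  have hp : p = 0 :=
    eq_zero_of_infinite_isRoot p ((Set.finite_singleton 0).infinite_compl.mono hroots)
  funext j
  simpa [p, finsetSum_coeff, coeff_C_mul_X_pow, Fin.val_inj] using
    congrArg (coeff · (j.val + 1)) hp

theorem eq_zero_of_forall_map_weighted_eq_zero
    (f : (Fin n → K) →ₗ[K] K) (hf : ∀ i, f (Pi.single i 1) ≠ 0) (b : Fin n → K)
    (h : ∀ t : K, t ≠ 0 → f (fun i => t ^ (i.val + 1) * b i) = 0) : b = 0 := by
  have hc : (fun i => b i * f (Pi.single i 1)) = 0 := by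
    refine eq_zero_of_forall_sum_mul_pow_succ_eq_zero _ fun t ht => ?_
    rw [← h t ht, LinearMap.pi_apply_eq_sum_univ]
    refine Finset.sum_congr rfl fun i _ => ?_
    rw [show (fun j => if i = j then (1 : K) else 0) = Pi.single i 1 by
      ext j; simp [Pi.single_apply, eq_comm], smul_eq_mul]
    ring
  funext i
  exact (mul_eq_zero.mp (congrFun hc i)).resolve_right (hf i)

theorem eq_zero_of_forall_weighted_mem {B : Submodule K (Fin n → K)}
    (hB : Module.finrank K ((Fin n → K) ⧸ B) = 1)
    (hBe : ∀ i : Fin n, B ⊓ Submodule.span K {(Pi.single i 1 : Fin n → K)} = ⊥)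
    (b : Fin n → K) (h : ∀ t : K, t ≠ 0 → (fun i => t ^ (i.val + 1) * b i) ∈ B) :
    b = 0 := by
  obtain ⟨f, rfl⟩ := Submodule.exists_ker_eq_of_finrank_quotient_eq_one hB
  refine eq_zero_of_forall_map_weighted_eq_zero f (fun i hi => ?_) b h
  have := Submodule.disjoint_span_singleton.mp (disjoint_iff.mpr (hBe i)) hi
  exact one_ne_zero (Pi.single_eq_zero_iff.mp this)

end

theorem SemidirectProduct.apply_mem_of_inl_mem_normalCore {N G : Type*} [Group N] [Group G]
    {φ : G →* MulAut N} {H : Subgroup N} {n : N}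
    (hn : (inl n : N ⋊[φ] G) ∈ (H.map inl).normalCore) (g : G) : φ g n ∈ H := by
  have hconj := (Subgroup.normalCore_normal _).conj_mem _ hn (inr g)
  rw [← map_inv, ← inl_aut] at hconj
  obtain ⟨m, hm, hmn⟩ := Subgroup.mem_map.mp (Subgroup.normalCore_le _ hconj)
  exact inl_injective hmn ▸ hm

theorem stmt_1_general {K : Type*} [Field K] [IsAlgClosed K] (n : ℕ)
    (d : Kˣ →* AddAut (Fin n → K))
    (hd : ∀ (t : Kˣ) (a : Fin n → K) (i : Fin n), d t a i = (t : K) ^ (i.val + 1) * a i)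
    (B : Submodule K (Fin n → K))
    (hB : Module.finrank K ((Fin n → K) ⧸ B) = 1)
    (hBe : ∀ i : Fin n, B ⊓ Submodule.span K {(Pi.single i 1 : Fin n → K)} = ⊥) :
    (Subgroup.map
        (SemidirectProduct.inl (φ := addAutToMulAut.comp d))
        (AddSubgroup.toSubgroup B.toAddSubgroup)).normalCore = ⊥ := by
  refine (Subgroup.eq_bot_iff_forall _).mpr fun g hg => ?_
  obtain ⟨b, -, rfl⟩ := Subgroup.mem_map.mp (Subgroup.normalCore_le _ hg)
  have hb : Multiplicative.toAdd b = 0 := by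
    refine eq_zero_of_forall_weighted_mem hB hBe _ fun t ht => ?_
    have hdt : (fun i => t ^ (i.val + 1) * Multiplicative.toAdd b i) =
        d (Units.mk0 t ht) (Multiplicative.toAdd b) := funext fun i => by simp [hd]
    exact hdt ▸ SemidirectProduct.apply_mem_of_inl_mem_normalCore hg (Units.mk0 t ht)
  rw [← ofAdd_toAdd b, hb, ofAdd_zero, map_one]

/-- Let `K` be an algebraically closed field, `n ≥ 1`, `A = Kⁿ` (as an additive group),
`T = Kˣ` acting on `A` by `d t (a₁, …, aₙ) = (t·a₁, t²·a₂, …, tⁿ·aₙ)`, and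
`G = A ⋊ T` the corresponding semidirect product. If `B` is a linear hyperplane of
`Kⁿ` with `B ∩ K·eᵢ = 0` for all standard basis vectors `eᵢ`, regarded as a subgroup
of `G`, then the normal core of `B` in `G` is trivial. -/
theorem stmt_1 {K : Type*} [Field K] [IsAlgClosed K] (n : ℕ) (hn : 1 ≤ n)
    (d : Kˣ →* AddAut (Fin n → K))
    (hd : ∀ (t : Kˣ) (a : Fin n → K) (i : Fin n), d t a i = (t : K) ^ (i.val + 1) * a i)
    (B : Submodule K (Fin n → K))
    (hB : Module.finrank K ((Fin n → K) ⧸ B) = 1)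
    (hBe : ∀ i : Fin n, B ⊓ Submodule.span K {(Pi.single i 1 : Fin n → K)} = ⊥) :
    (Subgroup.map
        (SemidirectProduct.inl (φ := addAutToMulAut.comp d))
        (AddSubgroup.toSubgroup B.toAddSubgroup)).normalCore = ⊥ :=
  stmt_1_general n d hd B hB hBe
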